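/- arXiv:2004.12774 — 2 statements merged into one kernel-verified Lean document; each statement's English description precedes it below -/
import Mathlib

section
/- Let λ be a real number. If some derivation of the 3-dimensional Heisenberg Lie algebra h₃ has characteristic polynomial X·(X² − 2λX + (λ² + 1)), then λ = 0. -/
set_option linter.unusedTactic false
set_option linter.unnecessarySeqFocus false
set_option linter.unreachableTactic false

open Polynomial

/-- The 3-dimensional Heisenberg Lie algebra `h₃`: the real vector space `Fin 3 → ℝ`
with basis `e₁, e₂, e₃` and only nonzero bracket `⁅e₁, e₂⁆ = e₃`. -/
def H3 : Type := Fin 3 → ℝ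

noncomputable instance : AddCommGroup H3 := Pi.addCommGroup
noncomputable instance : Module ℝ H3 := Pi.module _ _ _
instance : FiniteDimensional ℝ H3 := inferInstanceAs (FiniteDimensional ℝ (Fin 3 → ℝ))

lemma H3.add_apply (x y : H3) (i : Fin 3) : (x + y) i = x i + y i := rfl
lemma H3.smul_apply (r : ℝ) (x : H3) (i : Fin 3) : (r • x) i = r * x i := rfl

noncomputable instance : LieRing H3 :=
  { (inferInstance : AddCommGroup H3) with
    bracket := fun x y => ![0, 0, x 0 * y 1 - x 1 * y 0]
    add_lie := by
      intro x y z
      show (![_,_,_] : Fin 3 → ℝ) = (![_,_,_] : Fin 3 → ℝ) + (![_,_,_] : Fin 3 → ℝ)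
      funext i
      fin_cases i <;> simp [H3.add_apply] <;> ring
    lie_add := by
      intro x y z
      show (![_,_,_] : Fin 3 → ℝ) = (![_,_,_] : Fin 3 → ℝ) + (![_,_,_] : Fin 3 → ℝ)
      funext i
      fin_cases i <;> simp [H3.add_apply] <;> ring
    lie_self := by
      intro x
      show (![_,_,_] : Fin 3 → ℝ) = 0
      funext i
      fin_cases i <;> simp <;> ring
    leibniz_lie := by
      intro x y z
      show (![_,_,_] : Fin 3 → ℝ) = (![_,_,_] : Fin 3 → ℝ) + (![_,_,_] : Fin 3 → ℝ)
      funext i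
      fin_cases i <;> simp [H3.add_apply] <;> ring }

noncomputable instance : LieAlgebra ℝ H3 :=
  { lie_smul := by
      intro r x y
      show (![_,_,_] : Fin 3 → ℝ) = r • (![_,_,_] : Fin 3 → ℝ)
      funext i
      fin_cases i <;> simp [H3.smul_apply] <;> ring }

/-! A derivation `D` of `h₃` preserves the centre `ℝ e₃ = ⁅h₃, h₃⁆`, and the Leibniz rule applied to
`⁅e₁, e₂⁆ = e₃` shows that it acts there by `t = D₁₁ + D₂₂`. Hence `t` is a real eigenvalue of `D`
and `tr D = 2t`. The only real root of `X (X² - 2λX + λ² + 1)` is `0`, so `t = 0`, while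
`tr D = 2λ` can be read off the characteristic polynomial; thus `λ = 0`. -/

open Module

theorem LinearMap.trace_eq_neg_charpoly_nextCoeff {R M : Type*} [CommRing R] [Nontrivial R]
    [AddCommGroup M] [Module R M] [Free R M] [Module.Finite R M] (f : End R M) :
    LinearMap.trace R M f = -f.charpoly.nextCoeff := by
  let b := Free.chooseBasis R M
  rw [LinearMap.trace_eq_matrix_trace R b, ← f.charpoly_toMatrix b,
    Matrix.trace_eq_neg_charpoly_nextCoeff]

namespace Polynomial

theorem nextCoeff_X_mul_X_sq_sub_C_mul_X_add_C {R : Type*} [CommRing R] [Nontrivial R] (a b : R) :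
    (X * (X ^ 2 - C a * X + C b)).nextCoeff = -a := by
  have hdeg : (X * (X ^ 2 - C a * X + C b)).natDegree = 3 := by compute_degree!
  rw [nextCoeff, hdeg]
  simp [coeff_X_mul, coeff_X_pow, coeff_C]

theorem eq_zero_of_isRoot_X_mul_X_sq_sub_C_mul_X_add_C {K : Type*} [Field K] [LinearOrder K]
    [IsStrictOrderedRing K] {a b x : K} (hab : a ^ 2 < 4 * b)
    (hx : (X * (X ^ 2 - C a * X + C b)).IsRoot x) : x = 0 := by
  simp only [IsRoot, eval_mul, eval_X, eval_add, eval_sub, eval_pow, eval_C] at hx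
  refine (mul_eq_zero.1 hx).resolve_right fun hq => ?_
  nlinarith [sq_nonneg (2 * x - a)]

end Polynomial

namespace H3

lemma lie_def (x y : H3) : ⁅x, y⁆ = ![0, 0, x 0 * y 1 - x 1 * y 0] := rfl

noncomputable def basis : Basis (Fin 3) ℝ H3 := Pi.basisFun ℝ (Fin 3)

lemma basis_apply (i j : Fin 3) : basis i j = if i = j then 1 else 0 := by
  show Pi.basisFun ℝ (Fin 3) i j = _
  simp [Pi.single_apply, eq_comm]

lemma basis_repr_apply (x : H3) (i : Fin 3) : basis.repr x i = x i := rfl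

lemma derivation_apply_basis_two (D : LieDerivation ℝ H3 H3) :
    D (basis 2) = (D (basis 0) 0 + D (basis 1) 1) • basis 2 := by
  have hbr : ⁅basis 0, basis 1⁆ = basis 2 := by
    funext i; fin_cases i <;> simp [lie_def, basis_apply]
  rw [← hbr, D.apply_lie_eq_add, add_comm]
  funext i; rw [H3.add_apply, H3.smul_apply]
  fin_cases i <;> simp [lie_def, basis_apply]

lemma hasEigenvalue_derivation (D : LieDerivation ℝ H3 H3) :
    End.HasEigenvalue (D : End ℝ H3) (D (basis 0) 0 + D (basis 1) 1) :=
  End.hasEigenvalue_of_hasEigenvector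
    ⟨End.mem_eigenspace_iff.2 (derivation_apply_basis_two D), basis.ne_zero 2⟩

lemma trace_derivation (D : LieDerivation ℝ H3 H3) :
    LinearMap.trace ℝ H3 D = 2 * (D (basis 0) 0 + D (basis 1) 1) := by
  rw [LinearMap.trace_eq_matrix_trace ℝ basis, Matrix.trace, Fin.sum_univ_three]
  simp only [Matrix.diag, LinearMap.toMatrix_apply, basis_repr_apply, LieDerivation.coeFn_coe,
    derivation_apply_basis_two, H3.smul_apply, basis_apply]
  norm_num
  ring

end H3

/-- If some derivation of `h₃` has characteristic polynomial `X * (X² - 2λX + (λ² + 1))`,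
then `λ = 0`. -/
theorem eq_zero_of_charpoly_derivation_heisenberg (lam : ℝ)
    (h : ∃ D : LieDerivation ℝ H3 H3,
      LinearMap.charpoly D.toLinearMap
        = X * (X ^ 2 - C (2 * lam) * X + C (lam ^ 2 + 1))) :
    lam = 0 := by
  obtain ⟨D, hD⟩ := h
  have hdisc : (2 * lam) ^ 2 < 4 * (lam ^ 2 + 1) := by linarith
  have hroot : D (H3.basis 0) 0 + D (H3.basis 1) 1 = 0 := by
    have := (End.hasEigenvalue_iff_isRoot_charpoly _ _).1 (H3.hasEigenvalue_derivation D)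
    exact eq_zero_of_isRoot_X_mul_X_sq_sub_C_mul_X_add_C hdisc (hD ▸ this)
  have htrace := H3.trace_derivation D
  rw [LinearMap.trace_eq_neg_charpoly_nextCoeff, hD, nextCoeff_X_mul_X_sq_sub_C_mul_X_add_C,
    hroot] at htrace
  linarith
end

section
/- For every derivation D of the filiform Lie algebra n₄, the multiplicity of 0 as a root of the characteristic polynomial of D is either 0, 1, or 4; in particular, no derivation of n₄ has 0 as an eigenvalue with algebraic multiplicity exactly 2 or exactly 3. -/
set_option linter.unusedTactic false
set_option linter.unnecessarySeqFocus false
set_option linter.unreachableTactic false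

open Polynomial

/-- The 4-dimensional filiform Lie algebra `n₄`: the real vector space `Fin 4 → ℝ` with
basis `e₁, e₂, e₃, e₄` and only nonzero brackets `⁅e₁, e₂⁆ = e₃` and `⁅e₁, e₃⁆ = e₄`. -/
def N4 : Type := Fin 4 → ℝ

noncomputable instance : AddCommGroup N4 := Pi.addCommGroup
noncomputable instance : Module ℝ N4 := Pi.module _ _ _
instance : FiniteDimensional ℝ N4 := inferInstanceAs (FiniteDimensional ℝ (Fin 4 → ℝ))

lemma N4.add_apply (x y : N4) (i : Fin 4) : (x + y) i = x i + y i := rfl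
lemma N4.smul_apply (r : ℝ) (x : N4) (i : Fin 4) : (r • x) i = r * x i := rfl

noncomputable instance : LieRing N4 :=
  { (inferInstance : AddCommGroup N4) with
    bracket := fun x y => ![0, 0, x 0 * y 1 - x 1 * y 0, x 0 * y 2 - x 2 * y 0]
    add_lie := by
      intro x y z
      show (![_,_,_,_] : Fin 4 → ℝ) = (![_,_,_,_] : Fin 4 → ℝ) + (![_,_,_,_] : Fin 4 → ℝ)
      funext i
      fin_cases i <;> simp [N4.add_apply] <;> ring
    lie_add := by
      intro x y z
      show (![_,_,_,_] : Fin 4 → ℝ) = (![_,_,_,_] : Fin 4 → ℝ) + (![_,_,_,_] : Fin 4 → ℝ)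
      funext i
      fin_cases i <;> simp [N4.add_apply] <;> ring
    lie_self := by
      intro x
      show (![_,_,_,_] : Fin 4 → ℝ) = 0
      funext i
      fin_cases i <;> simp <;> ring
    leibniz_lie := by
      intro x y z
      show (![_,_,_,_] : Fin 4 → ℝ) = (![_,_,_,_] : Fin 4 → ℝ) + (![_,_,_,_] : Fin 4 → ℝ)
      funext i
      fin_cases i <;> simp [N4.add_apply] <;> ring }

noncomputable instance : LieAlgebra ℝ N4 :=
  { lie_smul := by
      intro r x y
      show (![_,_,_,_] : Fin 4 → ℝ) = r • (![_,_,_,_] : Fin 4 → ℝ)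
      funext i
      fin_cases i <;> simp [N4.smul_apply] <;> ring }


/-!
A derivation `D` of `n₄` is lower triangular in the basis `e₁, e₂, e₃, e₄`: the Leibniz rule
applied to `⁅e₁, e₂⁆ = e₃`, `⁅e₁, e₃⁆ = e₄` and `⁅e₂, e₃⁆ = 0` expresses `D e₃` and `D e₄` through
`D e₁` and `D e₂`, and kills the `e₁`-component of `D e₂`. Writing `a`, `b` for the diagonal
entries at `e₁`, `e₂`, the diagonal is `a, b, a + b, 2a + b`, and the multiplicity of `0` counts
its vanishing entries. If `a = 0` these entries are `0, b, b, b`; if `a ≠ 0`, at most one of them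
vanishes, since `b, a + b, 2a + b` is an arithmetic progression with nonzero step.
-/

open Finset

theorem Matrix.charpoly_of_isLowerTriangular {n R : Type*} [CommRing R] [Fintype n]
    [DecidableEq n] [LinearOrder n] (M : Matrix n n R) (h : M.IsLowerTriangular) :
    M.charpoly = ∏ i, (X - C (M i i)) := by
  simp [Matrix.charpoly, Matrix.det_of_isLowerTriangular _ h.charmatrix]

theorem Polynomial.rootMultiplicity_prod_X_sub_C {ι R : Type*} [CommRing R] [IsDomain R]
    [DecidableEq R] [Fintype ι] (d : ι → R) (a : R) :
    (∏ i, (X - C (d i))).rootMultiplicity a = #{i | d i = a} := by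
  have hprod : ∏ i, (X - C (d i)) = ((univ.val.map d).map fun r => X - C r).prod := by
    rw [Multiset.map_map]; rfl
  rw [hprod, ← count_roots, roots_multiset_prod_X_sub_C, Multiset.count_map, card_def,
    filter_val]
  simp_rw [eq_comm]

section Weights

variable {K : Type*} [Field K] [CharZero K] [DecidableEq K]

theorem card_filter_eq_zero_le_one_of_ne_zero {a : K} (ha : a ≠ 0) (b : K) :
    #{i | ![a, b, a + b, 2 * a + b] i = 0} ≤ 1 := by
  refine card_le_one.2 fun i hi j hj => ?_
  simp only [mem_filter, mem_univ, true_and] at hi hj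
  fin_cases i <;> fin_cases j <;> simp at hi hj ⊢ <;> grind

theorem card_filter_eq_zero_eq_zero_or_one_or_four (a b : K) :
    #{i | ![a, b, a + b, 2 * a + b] i = 0} = 0 ∨ #{i | ![a, b, a + b, 2 * a + b] i = 0} = 1 ∨
      #{i | ![a, b, a + b, 2 * a + b] i = 0} = 4 := by
  rcases eq_or_ne a 0 with rfl | ha
  · simp only [card_filter, Fin.sum_univ_four]
    by_cases hb : b = 0 <;> simp [hb]
  · have := card_filter_eq_zero_le_one_of_ne_zero ha b
    omega

end Weights

namespace N4

noncomputable def basis : Module.Basis (Fin 4) ℝ N4 := Pi.basisFun ℝ (Fin 4)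

lemma basis_apply (i j : Fin 4) : basis i j = if i = j then 1 else 0 :=
  (congrFun (Pi.basisFun_apply ℝ (Fin 4) i) j).trans (by simp [Pi.single_apply, eq_comm])

lemma basis_repr (x : N4) (i : Fin 4) : basis.repr x i = x i :=
  Pi.basisFun_repr (R := ℝ) (η := Fin 4) x i

lemma zero_apply (i : Fin 4) : (0 : N4) i = 0 := rfl

lemma lie_apply (x y : N4) (i : Fin 4) :
    ⁅x, y⁆ i = ![0, 0, x 0 * y 1 - x 1 * y 0, x 0 * y 2 - x 2 * y 0] i := rfl

lemma lie_basis_zero_one : ⁅basis 0, basis 1⁆ = basis 2 := by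
  funext i; fin_cases i <;> simp [lie_apply, basis_apply]

lemma lie_basis_zero_two : ⁅basis 0, basis 2⁆ = basis 3 := by
  funext i; fin_cases i <;> simp [lie_apply, basis_apply]

lemma lie_basis_one_two : ⁅basis 1, basis 2⁆ = 0 := by
  funext i; fin_cases i <;> simp [lie_apply, basis_apply] <;> rfl

variable (D : LieDerivation ℝ N4 N4)

lemma derivation_basis_two :
    D (basis 2) = ![0, 0, D (basis 0) 0 + D (basis 1) 1, D (basis 1) 2] := by
  rw [← lie_basis_zero_one, D.apply_lie_eq_add]
  funext i
  rw [N4.add_apply, lie_apply, lie_apply]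
  fin_cases i <;> simp [basis_apply, add_comm]

lemma derivation_basis_three :
    D (basis 3) = ![0, 0, 0, 2 * D (basis 0) 0 + D (basis 1) 1] := by
  rw [← lie_basis_zero_two, D.apply_lie_eq_add]
  funext i
  rw [N4.add_apply, lie_apply, lie_apply, derivation_basis_two]
  fin_cases i <;> simp [basis_apply] <;> ring

lemma derivation_basis_one_zero : D (basis 1) 0 = 0 := by
  have h := congrFun (D.apply_lie_eq_add (basis 1) (basis 2)) 3
  rw [lie_basis_one_two, map_zero, zero_apply, N4.add_apply, lie_apply, lie_apply,
    derivation_basis_two] at h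
  simpa [basis_apply] using h.symm

lemma toMatrix_derivation_apply (i j : Fin 4) :
    LinearMap.toMatrix basis basis D.toLinearMap i j = D (basis j) i := by
  rw [LinearMap.toMatrix_apply, basis_repr]; rfl

lemma isLowerTriangular_toMatrix_derivation :
    (LinearMap.toMatrix basis basis D.toLinearMap).IsLowerTriangular := by
  intro i j hij
  rw [OrderDual.toDual_lt_toDual] at hij
  rw [toMatrix_derivation_apply]
  fin_cases i <;> fin_cases j <;>
    simp [derivation_basis_two, derivation_basis_three, derivation_basis_one_zero] at hij ⊢

lemma charpoly_derivation : LinearMap.charpoly D.toLinearMap =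
    ∏ i, (X - C (![D (basis 0) 0, D (basis 1) 1, D (basis 0) 0 + D (basis 1) 1,
      2 * D (basis 0) 0 + D (basis 1) 1] i)) := by
  rw [← LinearMap.charpoly_toMatrix D.toLinearMap basis,
    Matrix.charpoly_of_isLowerTriangular _ (isLowerTriangular_toMatrix_derivation D)]
  refine prod_congr rfl fun i _ => ?_
  rw [toMatrix_derivation_apply]
  fin_cases i <;> simp [derivation_basis_two, derivation_basis_three]

end N4

/-- For every derivation `D` of the filiform Lie algebra `n₄`, the multiplicity of `0` as a
root of the characteristic polynomial of `D` is `0`, `1` or `4`; in particular no derivation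
of `n₄` has `0` as an eigenvalue with algebraic multiplicity exactly `2` or exactly `3`. -/
theorem rootMultiplicity_zero_charpoly_derivation_n4 (D : LieDerivation ℝ N4 N4) :
    (LinearMap.charpoly D.toLinearMap).rootMultiplicity 0 = 0 ∨
    (LinearMap.charpoly D.toLinearMap).rootMultiplicity 0 = 1 ∨
    (LinearMap.charpoly D.toLinearMap).rootMultiplicity 0 = 4 := by
  rw [N4.charpoly_derivation, rootMultiplicity_prod_X_sub_C]
  exact card_filter_eq_zero_eq_zero_or_one_or_four _ _
end
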